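/- (Random target lemma) Let P be an irreducible stochastic matrix on a finite state space V with stationary distribution π. Then there exists a constant κ such that Σ_{j∈V} π_j τ_{i→j} = κ for every i ∈ V, where τ_{i→j} is the mean hitting time from i to j. -/

import Mathlib

/-!
Fix a target `b` and write `τ_b = meanHit P {b}`. Off `b` it satisfies `τ_b = 1 + P τ_b`; at `b` the
right-hand side is the mean return time `r_b`, so `τ_b + r_b 𝟙_b = 1 + P τ_b` everywhere. Pairing this
with the stationary `π` gives Kac's formula `π_b r_b = ∑ π`, and weighting it by `π_b` and summing
over `b` then shows that `H i = ∑_b π_b τ_b(i)` is harmonic, `H = P H`. By the minimum principle a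
harmonic function of an irreducible chain is constant. The cancellations need `τ_b < ∞`: by
irreducibility there is an `N` such that from every state `b` is hit within `N` steps with
probability bounded away from `0`, so the survival probabilities decay geometrically.
-/

open scoped ENNReal Classical

/-- `hitBy P S n i = P(T_S ≤ n | Y_0 = i)` for a Markov chain with transition matrix `P`. -/
noncomputable def hitBy {V : Type*} (P : V → V → ℝ≥0∞) (S : Set V) : ℕ → V → ℝ≥0∞
  | 0, i => if i ∈ S then 1 else 0
  | n + 1, i => if i ∈ S then 1 else ∑' j, P i j * hitBy P S n j

/-- The mean hitting time `τ_{i→S} = E[T_S | Y_0 = i]`. -/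
noncomputable def meanHit {V : Type*} (P : V → V → ℝ≥0∞) (S : Set V) (i : V) : ℝ≥0∞ :=
  ∑' n, (1 - hitBy P S n i)

theorem ENNReal.tsum_pow_div (a : ℝ≥0∞) (N : ℕ) [NeZero N] :
    ∑' n, a ^ (n / N) = N * (1 - a)⁻¹ :=
  calc ∑' n, a ^ (n / N) = ∑' p : ℕ × Fin N, a ^ p.1 :=
        (Nat.divModEquiv N).tsum_eq fun p => a ^ p.1
    _ = ∑' k, ∑' _ : Fin N, a ^ k := ENNReal.tsum_prod (f := fun k _ => a ^ k)
    _ = N * (1 - a)⁻¹ := by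
        simp only [tsum_fintype, Finset.sum_const, Finset.card_univ, Fintype.card_fin,
          nsmul_eq_mul, ENNReal.tsum_mul_left, ENNReal.tsum_geometric]

section HittingTimes

variable {V : Type*} {P : V → V → ℝ≥0∞} {S : Set V} {i : V}

noncomputable def survival (P : V → V → ℝ≥0∞) (S : Set V) (n : ℕ) (i : V) : ℝ≥0∞ :=
  1 - hitBy P S n i

theorem meanHit_eq_tsum_survival : meanHit P S i = ∑' n, survival P S n i := rfl

theorem hitBy_of_mem (hi : i ∈ S) (n : ℕ) : hitBy P S n i = 1 := by
  cases n <;> simp [hitBy, hi]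

theorem hitBy_succ_of_notMem (hi : i ∉ S) (n : ℕ) :
    hitBy P S (n + 1) i = ∑' j, P i j * hitBy P S n j := by
  simp [hitBy, hi]

theorem hitBy_le_hitBy_succ (S : Set V) (n : ℕ) (i : V) :
    hitBy P S n i ≤ hitBy P S (n + 1) i := by
  induction n generalizing i with
  | zero => by_cases hi : i ∈ S <;> simp [hitBy, hi]
  | succ n ih =>
    by_cases hi : i ∈ S
    · simp [hitBy_of_mem hi]
    · rw [hitBy_succ_of_notMem hi, hitBy_succ_of_notMem hi]
      exact ENNReal.tsum_le_tsum fun j => mul_le_mul_right (ih j) _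

theorem hitBy_mono (S : Set V) (i : V) : Monotone (hitBy P S · i) :=
  monotone_nat_of_le_succ (hitBy_le_hitBy_succ S · i)

theorem survival_antitone (S : Set V) (i : V) : Antitone (survival P S · i) :=
  fun _ _ hmn => tsub_le_tsub_left (hitBy_mono S i hmn) 1

theorem survival_of_mem (hi : i ∈ S) (n : ℕ) : survival P S n i = 0 := by
  simp [survival, hitBy_of_mem hi]

theorem survival_zero_of_notMem (hi : i ∉ S) : survival P S 0 i = 1 := by
  simp [survival, hitBy, hi]

theorem exists_hitBy_pos {b : V} (hb : b ∈ S)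
    (hib : Relation.ReflTransGen (fun a c => 0 < P a c) i b) : ∃ n, 0 < hitBy P S n i := by
  induction hib using Relation.ReflTransGen.head_induction_on with
  | refl => exact ⟨0, by simp [hitBy_of_mem hb]⟩
  | @head a c hac _ ih =>
    obtain ⟨n, hn⟩ := ih
    refine ⟨n + 1, ?_⟩
    by_cases ha : a ∈ S
    · simp [hitBy_of_mem ha]
    · rw [hitBy_succ_of_notMem ha]
      exact (ENNReal.mul_pos hac.ne' hn.ne').trans_le (ENNReal.le_tsum c)

theorem meanHit_of_mem (hi : i ∈ S) : meanHit P S i = 0 := by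
  simp [meanHit_eq_tsum_survival, survival_of_mem hi]

variable [Fintype V]

theorem hitBy_le_one (hst : ∀ i, ∑ j, P i j = 1) (S : Set V) (n : ℕ) (i : V) :
    hitBy P S n i ≤ 1 := by
  induction n generalizing i with
  | zero => by_cases hi : i ∈ S <;> simp [hitBy, hi]
  | succ n ih =>
    by_cases hi : i ∈ S
    · simp [hitBy_of_mem hi]
    · rw [hitBy_succ_of_notMem hi, tsum_fintype, ← hst i]
      exact Finset.sum_le_sum fun j _ => mul_le_of_le_one_right' (ih j)

theorem survival_succ_of_notMem (hst : ∀ i, ∑ j, P i j = 1) (hi : i ∉ S) (n : ℕ) :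
    survival P S (n + 1) i = ∑ j, P i j * survival P S n j := by
  have hsplit : ∑ j, P i j * survival P S n j + hitBy P S (n + 1) i = 1 := by
    rw [hitBy_succ_of_notMem hi, tsum_fintype, ← Finset.sum_add_distrib, ← hst i]
    refine Finset.sum_congr rfl fun j _ => ?_
    rw [← mul_add, survival, tsub_add_cancel_of_le (hitBy_le_one hst S n j), mul_one]
  exact (ENNReal.eq_sub_of_add_eq (ne_top_of_le_ne_top ENNReal.one_ne_top
    (hitBy_le_one hst S _ i)) hsplit).symm

theorem meanHit_of_notMem (hst : ∀ i, ∑ j, P i j = 1) (hi : i ∉ S) :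
    meanHit P S i = 1 + ∑ j, P i j * meanHit P S j := by
  rw [meanHit_eq_tsum_survival, tsum_eq_zero_add' ENNReal.summable, survival_zero_of_notMem hi]
  simp_rw [survival_succ_of_notMem hst hi, meanHit_eq_tsum_survival, ← ENNReal.tsum_mul_left]
  exact congrArg _ (Summable.tsum_finsetSum fun j _ => ENNReal.summable)

theorem survival_add_le (hst : ∀ i, ∑ j, P i j = 1) {m : ℕ} {M : ℝ≥0∞}
    (hM : ∀ k, survival P S m k ≤ M) (n : ℕ) (i : V) :
    survival P S (m + n) i ≤ survival P S n i * M := by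
  induction n generalizing i with
  | zero =>
    by_cases hi : i ∈ S
    · simp [survival_of_mem hi]
    · simpa [survival_zero_of_notMem hi] using hM i
  | succ n ih =>
    by_cases hi : i ∈ S
    · simp [survival_of_mem hi]
    · rw [← add_assoc, survival_succ_of_notMem hst hi, survival_succ_of_notMem hst hi,
        Finset.sum_mul]
      exact Finset.sum_le_sum fun j _ => by rw [mul_assoc]; exact mul_le_mul_right (ih j) _

theorem survival_mul_le_pow (hst : ∀ i, ∑ j, P i j = 1) {N : ℕ} {a : ℝ≥0∞}
    (ha : ∀ i, survival P S N i ≤ a) (k : ℕ) (i : V) : survival P S (N * k) i ≤ a ^ k := by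
  induction k generalizing i with
  | zero => simp only [mul_zero, pow_zero]; exact tsub_le_self
  | succ k ih =>
    calc survival P S (N * (k + 1)) i = survival P S (N + N * k) i := by ring_nf
      _ ≤ survival P S (N * k) i * a := survival_add_le hst ha _ i
      _ ≤ a ^ (k + 1) := by rw [pow_succ]; exact mul_le_mul_left (ih i) _

theorem exists_survival_le_lt_one
    (hreach : ∀ i, ∃ b ∈ S, Relation.ReflTransGen (fun a c => 0 < P a c) i b) :
    ∃ N ≠ 0, ∃ a < 1, ∀ i, survival P S N i ≤ a := by
  choose b hbS hib using hreach
  choose n hn using fun i => exists_hitBy_pos (hbS i) (hib i)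
  set N := Finset.univ.sup n + 1
  refine ⟨N, Nat.add_one_ne_zero _, Finset.univ.sup (survival P S N), ?_,
    fun i => Finset.le_sup (Finset.mem_univ i)⟩
  refine (Finset.sup_lt_iff zero_lt_one).2 fun i _ => ?_
  have hNi : n i ≤ N := (Finset.le_sup (Finset.mem_univ i)).trans (Nat.le_add_right _ 1)
  have hhit : 0 < hitBy P S N i := (hn i).trans_le (hitBy_mono S i hNi)
  exact ENNReal.sub_lt_self ENNReal.one_ne_top one_ne_zero hhit.ne'

theorem meanHit_ne_top (hst : ∀ i, ∑ j, P i j = 1)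
    (hreach : ∀ i, ∃ b ∈ S, Relation.ReflTransGen (fun a c => 0 < P a c) i b) (i : V) :
    meanHit P S i ≠ ∞ := by
  obtain ⟨N, hN, a, ha, hsurv⟩ := exists_survival_le_lt_one hreach
  have : NeZero N := ⟨hN⟩
  have hdecay : ∀ n, survival P S n i ≤ a ^ (n / N) := fun n =>
    (survival_antitone S i (Nat.mul_div_le n N)).trans (survival_mul_le_pow hst hsurv _ i)
  refine ne_top_of_le_ne_top ?_ (ENNReal.tsum_le_tsum hdecay)
  rw [ENNReal.tsum_pow_div]
  exact ENNReal.mul_ne_top (ENNReal.natCast_ne_top N)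
    (ENNReal.inv_ne_top.2 (tsub_pos_of_lt ha).ne')

end HittingTimes

section Stationary

variable {V : Type*} [Fintype V] {P : V → V → ℝ≥0∞} {π : V → ℝ≥0∞}

noncomputable def meanReturn (P : V → V → ℝ≥0∞) (b : V) : ℝ≥0∞ :=
  1 + ∑ k, P b k * meanHit P {b} k

theorem meanHit_add_ite_meanReturn (hst : ∀ i, ∑ j, P i j = 1) (b i : V) :
    meanHit P {b} i + (if i = b then meanReturn P b else 0) =
      1 + ∑ k, P i k * meanHit P {b} k := by
  by_cases hib : i = b
  · subst hib
    simp [meanHit_of_mem, meanReturn]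
  · rw [if_neg hib, add_zero, meanHit_of_notMem hst (S := {b}) hib]

theorem sum_mul_sum_of_stationary (hπstat : ∀ j, ∑ i, π i * P i j = π j) (f : V → ℝ≥0∞) :
    ∑ i, π i * ∑ k, P i k * f k = ∑ k, π k * f k := by
  simp_rw [Finset.mul_sum, ← mul_assoc]
  rw [Finset.sum_comm]
  simp_rw [← Finset.sum_mul, hπstat]

/-- Kac's formula. -/
theorem mul_meanReturn_eq_sum (hst : ∀ i, ∑ j, P i j = 1)
    (hπstat : ∀ j, ∑ i, π i * P i j = π j) {b : V}
    (hfin : ∑ i, π i * meanHit P {b} i ≠ ∞) : π b * meanReturn P b = ∑ i, π i := by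
  have h := congrArg (fun f : V → ℝ≥0∞ => ∑ i, π i * f i)
    (funext (meanHit_add_ite_meanReturn hst b (P := P)))
  simp only [mul_add, mul_one, mul_ite, mul_zero, Finset.sum_add_distrib, Finset.sum_ite_eq',
    Finset.mem_univ, if_true, sum_mul_sum_of_stationary hπstat] at h
  rwa [add_comm (∑ i, π i), ENNReal.add_right_inj hfin] at h

theorem sum_mul_meanHit_harmonic (hst : ∀ i, ∑ j, P i j = 1)
    (hkac : ∀ b, π b * meanReturn P b = ∑ i, π i) (hπsum : ∑ i, π i ≠ ∞) (i : V) :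
    ∑ k, P i k * ∑ b, π b * meanHit P {b} k = ∑ b, π b * meanHit P {b} i := by
  have h := congrArg (fun f : V → ℝ≥0∞ => ∑ b, π b * f b)
    (funext fun b => meanHit_add_ite_meanReturn hst b i)
  simp only [mul_add, mul_one, mul_ite, mul_zero, Finset.sum_add_distrib, Finset.sum_ite_eq,
    Finset.mem_univ, if_true, hkac] at h
  rw [add_comm, ENNReal.add_right_inj hπsum] at h
  rw [h]
  simp_rw [Finset.mul_sum, mul_left_comm (P i _)]
  exact Finset.sum_comm

end Stationary

section Harmonic

variable {V : Type*} [Fintype V] {P : V → V → ℝ≥0∞} {h : V → ℝ≥0∞}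

theorem eq_of_forall_le_of_harmonic {c d : V} (hc : ∑ j, P c j = 1)
    (hharm : ∑ j, P c j * h j = h c) (hmin : ∀ k, h c ≤ h k) (hcd : 0 < P c d) :
    h d = h c := by
  by_cases htop : h c = ∞
  · rw [htop, ← top_le_iff, ← htop]
    exact hmin d
  have hexcess : ∑ j, P c j * (h j - h c) = 0 := by
    refine (ENNReal.add_right_inj htop).1 ?_
    calc h c + ∑ j, P c j * (h j - h c) = ∑ j, P c j * h c + ∑ j, P c j * (h j - h c) := by
          rw [← Finset.sum_mul, hc, one_mul]
      _ = ∑ j, P c j * h j := by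
          rw [← Finset.sum_add_distrib]
          refine Finset.sum_congr rfl fun j _ => ?_
          rw [← mul_add, add_tsub_cancel_of_le (hmin j)]
      _ = h c + 0 := by rw [hharm, add_zero]
  have hd := (Finset.sum_eq_zero_iff.1 hexcess) d (Finset.mem_univ d)
  rw [mul_eq_zero, tsub_eq_zero_iff_le] at hd
  exact le_antisymm (hd.resolve_left hcd.ne') (hmin d)

theorem exists_forall_eq_of_harmonic (hst : ∀ i, ∑ j, P i j = 1)
    (hirr : ∀ i j : V, Relation.ReflTransGen (fun a b => 0 < P a b) i j)
    (hharm : ∀ i, ∑ j, P i j * h j = h i) : ∃ c, ∀ i, h i = c := by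
  rcases isEmpty_or_nonempty V with hV | hV
  · exact ⟨0, fun i => isEmptyElim i⟩
  obtain ⟨i₀, -, hmin⟩ := Finset.univ.exists_min_image h Finset.univ_nonempty
  refine ⟨h i₀, fun i => ?_⟩
  induction hirr i₀ i with
  | refl => rfl
  | tail _ hcd ih =>
    exact (eq_of_forall_le_of_harmonic (hst _) (hharm _)
      (fun k => ih ▸ hmin k (Finset.mem_univ k)) hcd).trans ih

end Harmonic

theorem random_target_lemma_general {V : Type*} [Fintype V]
    (P : V → V → ℝ≥0∞) (hst : ∀ i, ∑ j, P i j = 1)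
    (hirr : ∀ i j : V, Relation.ReflTransGen (fun a b => 0 < P a b) i j)
    (π : V → ℝ≥0∞) (hπsum : ∑ i, π i = 1)
    (hπstat : ∀ j, ∑ i, π i * P i j = π j) :
    ∃ κ : ℝ≥0∞, ∀ i : V, ∑ j, π j * meanHit P {j} i = κ := by
  have hπ : ∀ i, π i ≠ ∞ := fun i =>
    ENNReal.sum_ne_top.1 (hπsum ▸ ENNReal.one_ne_top) i (Finset.mem_univ i)
  have hτ : ∀ b i, meanHit P {b} i ≠ ∞ := fun b =>
    meanHit_ne_top hst fun k => ⟨b, rfl, hirr k b⟩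
  have hkac : ∀ b, π b * meanReturn P b = ∑ i, π i := fun b =>
    mul_meanReturn_eq_sum hst hπstat
      (ENNReal.sum_ne_top.2 fun i _ => ENNReal.mul_ne_top (hπ i) (hτ b i))
  exact exists_forall_eq_of_harmonic hst hirr
    (sum_mul_meanHit_harmonic hst hkac (hπsum ▸ ENNReal.one_ne_top))

/-- **Random target lemma.** For an irreducible stochastic matrix `P` on a finite state
space with stationary distribution `π`, the quantity `∑_j π_j τ_{i→j}` does not depend
on `i`. -/
theorem random_target_lemma {V : Type*} [Fintype V]
    (P : V → V → ℝ≥0∞) (hst : ∀ i, ∑ j, P i j = 1)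
    (hirr : ∀ i j : V, Relation.ReflTransGen (fun a b => 0 < P a b) i j)
    (π : V → ℝ≥0∞) (hπpos : ∀ i, 0 < π i) (hπsum : ∑ i, π i = 1)
    (hπstat : ∀ j, ∑ i, π i * P i j = π j) :
    ∃ κ : ℝ≥0∞, ∀ i : V, ∑ j, π j * meanHit P {j} i = κ :=
  random_target_lemma_general P hst hirr π hπsum hπstat
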